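/- For the network without hidden layer with W = { w ∈ ℝ^d : ‖w‖₂ ≤ B₁ } and inputs satisfying ‖x‖₂ ≤ B₂, the dropout Rademacher complexity of dropout of both units and weights satisfies 𝔑_n(F_W^{(III)}) ≤ B₁B₂ρ/√n, where F_W^{(III)} = { (x,(r₁,r₂)) ↦ ⟨w⊙r₁, x⊙r₂⟩ : w ∈ W } and r₁, r₂ ∈ {0,1}^d have all entries i.i.d. Bern(ρ). -/

import Mathlib

open MeasureTheory Finset

noncomputable section

/-- `0/1` dropout mask as a real number. -/
def mask (b : Bool) : ℝ := if b then 1 else 0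

/-- Rademacher sign `±1`. -/
def sgn (b : Bool) : ℝ := if b then 1 else -1

/-- Probability of a single `Bern(ρ)` coordinate. -/
def bw (ρ : ℝ) (b : Bool) : ℝ := if b then ρ else 1 - ρ

/-- Empirical dropout Rademacher complexity of a class of functions on
`X × R` indexed by weights `w ∈ WS`, on sample `xs` and dropout variables `rs`.
The expectation over the i.i.d. uniform signs is the average over all `2ⁿ`
sign patterns. -/
def empRadW {Wt X R : Type*} (n : ℕ) (WS : Set Wt)
    (F : Wt → X → R → ℝ) (xs : Fin n → X) (rs : Fin n → R) : ℝ :=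
  (∑ ε : Fin n → Bool,
      sSup {v : ℝ | ∃ w ∈ WS,
        v = (1 / (n : ℝ)) * ∑ i, sgn (ε i) * F w (xs i) (rs i)}) / 2 ^ n

/-- The (expected) dropout Rademacher complexity `𝔑ₙ`: the expectation, over the
i.i.d. sample `xs ~ DXⁿ` and the i.i.d. dropout variables `rs` (each distributed
according to the finite Bernoulli-product law with weights `wt`), of the empirical
dropout Rademacher complexity. -/
def radC {Wt R : Type*} [Fintype R] (n d : ℕ) (DX : Measure (Fin d → ℝ))
    (WS : Set Wt) (wt : R → ℝ) (F : Wt → (Fin d → ℝ) → R → ℝ) : ℝ :=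
  ∫ xs : Fin n → Fin d → ℝ,
      ∑ rs : Fin n → R, (∏ i, wt (rs i)) * empRadW n WS F xs rs
    ∂(Measure.pi fun _ => DX)

/-- Weight class of the no-hidden-layer network: the `ℓ₂` ball of radius `B₁`. -/
def linW (d : ℕ) (B₁ : ℝ) : Set (Fin d → ℝ) :=
  {w | Real.sqrt (∑ j, w j ^ 2) ≤ B₁}

/-- Type (I) dropout (dropout of units) output of the no-hidden-layer network:
`(x, r) ↦ ⟨w, x⊙r⟩`. -/
def linFI (d : ℕ) : (Fin d → ℝ) → (Fin d → ℝ) → (Fin d → Bool) → ℝ :=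
  fun w x r => ∑ j, w j * (x j * mask (r j))

/-- Type (II) dropout (dropout of weights) output of the no-hidden-layer network:
`(x, r) ↦ ⟨w⊙r, x⟩`. -/
def linFII (d : ℕ) : (Fin d → ℝ) → (Fin d → ℝ) → (Fin d → Bool) → ℝ :=
  fun w x r => ∑ j, (w j * mask (r j)) * x j

/-- Type (III) dropout (dropout of both weights and units) output of the
no-hidden-layer network: `(x, (r₁, r₂)) ↦ ⟨w⊙r₁, x⊙r₂⟩`. -/
def linFIII (d : ℕ) :
    (Fin d → ℝ) → (Fin d → ℝ) → (Fin d → Bool) × (Fin d → Bool) → ℝ :=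
  fun w x r => ∑ j, (w j * mask (r.1 j)) * (x j * mask (r.2 j))

/-- Bernoulli product weight of a dropout vector `r ∈ {0,1}^d`. -/
def wtVec (d : ℕ) (ρ : ℝ) (r : Fin d → Bool) : ℝ := ∏ j, bw ρ (r j)

/-- Bernoulli product weight of a pair of dropout vectors. -/
def wtPair (d : ℕ) (ρ : ℝ) (r : (Fin d → Bool) × (Fin d → Bool)) : ℝ :=
  (∏ j, bw ρ (r.1 j)) * ∏ j, bw ρ (r.2 j)

end

/-! For fixed signs `ε`, Cauchy–Schwarz bounds the supremum over the ball by `B₁/n · ‖∑ᵢ εᵢ vᵢ‖`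
with `vᵢ = xᵢ ⊙ r₁ᵢ ⊙ r₂ᵢ`. Jensen for the concave `√`, first over the signs and then over the
masks, turns this into `B₁/n · √(E ∑ᵢ ‖vᵢ‖²)`, and `E[(r₁ⱼ r₂ⱼ)²] = ρ²` gives
`E ∑ᵢ ‖vᵢ‖² = ρ² ∑ᵢ ‖xᵢ‖² ≤ ρ² n B₂²`. -/

lemma sgn_mul_self (b : Bool) : sgn b * sgn b = 1 := by
  cases b <;> simp [sgn]

lemma sgn_not (b : Bool) : sgn (!b) = -sgn b := by
  cases b <;> simp [sgn]

section Rademacher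

variable {ι : Type*} [Fintype ι] [DecidableEq ι]

-- Flipping the sign `ε i` is an involution without fixed points that negates each summand.
lemma sum_sgn_mul_sgn_of_ne {i k : ι} (h : i ≠ k) :
    ∑ ε : ι → Bool, sgn (ε i) * sgn (ε k) = 0 := by
  refine sum_ninvolution (fun ε => Function.update ε i (!ε i)) (fun ε => ?_)
    (fun ε _ hε => by simpa using congrFun hε i) (fun _ => mem_univ _)
    (fun ε => by simp)
  rw [Function.update_self, Function.update_of_ne h.symm, sgn_not]
  ring

lemma sum_sgn_mul_sgn (i k : ι) :
    ∑ ε : ι → Bool, sgn (ε i) * sgn (ε k) = if i = k then 2 ^ Fintype.card ι else 0 := by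
  split_ifs with h
  · subst h
    simp [sgn_mul_self]
  · exact sum_sgn_mul_sgn_of_ne h

lemma sum_sq_sum_sgn_mul (a : ι → ℝ) :
    ∑ ε : ι → Bool, (∑ i, sgn (ε i) * a i) ^ 2 = 2 ^ Fintype.card ι * ∑ i, a i ^ 2 := by
  calc ∑ ε : ι → Bool, (∑ i, sgn (ε i) * a i) ^ 2
      = ∑ ε : ι → Bool, ∑ i, ∑ k, sgn (ε i) * sgn (ε k) * (a i * a k) := by
        refine sum_congr rfl fun ε _ => ?_
        rw [sq, sum_mul_sum]
        exact sum_congr rfl fun i _ => sum_congr rfl fun k _ => by ring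
    _ = ∑ i, ∑ k, (∑ ε : ι → Bool, sgn (ε i) * sgn (ε k)) * (a i * a k) := by
        simp only [sum_mul]
        rw [sum_comm]
        exact sum_congr rfl fun i _ => sum_comm
    _ = 2 ^ Fintype.card ι * ∑ i, a i ^ 2 := by
        simp [sum_sgn_mul_sgn, mul_sum, sq]

end Rademacher

lemma sum_mul_sqrt_le_sqrt_sum_mul {ι : Type*} {s : Finset ι} {p f : ι → ℝ}
    (hp : ∀ i ∈ s, 0 ≤ p i) (hp₁ : ∑ i ∈ s, p i = 1) (hf : ∀ i ∈ s, 0 ≤ f i) :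
    ∑ i ∈ s, p i * √(f i) ≤ √(∑ i ∈ s, p i * f i) :=
  Real.strictConcaveOn_sqrt.concaveOn.le_map_sum hp hp₁ hf

-- Jensen for `√` reduces this to the second moment, which the orthogonality of the signs computes.
lemma sum_sqrt_sum_sq_sum_sgn_mul_le {ι κ : Type*} [Fintype ι] [DecidableEq ι] [Fintype κ]
    (a : ι → κ → ℝ) :
    ∑ ε : ι → Bool, √(∑ j, (∑ i, sgn (ε i) * a i j) ^ 2)
      ≤ 2 ^ Fintype.card ι * √(∑ i, ∑ j, a i j ^ 2) := by
  have hN : (0 : ℝ) < 2 ^ Fintype.card ι := by positivity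
  have jensen := sum_mul_sqrt_le_sqrt_sum_mul (s := univ)
    (p := fun _ : ι → Bool => ((2 : ℝ) ^ Fintype.card ι)⁻¹)
    (f := fun ε => ∑ j, (∑ i, sgn (ε i) * a i j) ^ 2) (fun _ _ => by positivity)
    (by simp) (fun _ _ => by positivity)
  rw [← mul_sum, ← mul_sum, sum_comm] at jensen
  simp only [sum_sq_sum_sgn_mul, ← mul_sum] at jensen
  rw [inv_mul_cancel_left₀ hN.ne', inv_mul_le_iff₀ hN, sum_comm] at jensen
  exact jensen

lemma sum_mul_le_of_mem_linW {d : ℕ} {B : ℝ} {w : Fin d → ℝ} (hw : w ∈ linW d B)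
    (u : Fin d → ℝ) : ∑ j, w j * u j ≤ B * √(∑ j, u j ^ 2) :=
  (Real.sum_mul_le_sqrt_mul_sqrt _ w u).trans (mul_le_mul_of_nonneg_right hw (Real.sqrt_nonneg _))

theorem empRadW_linW_le {X R : Type*} {d n : ℕ} {B : ℝ} (hB : 0 ≤ B)
    (φ : X → R → Fin d → ℝ) (xs : Fin n → X) (rs : Fin n → R) :
    empRadW n (linW d B) (fun w x r => ∑ j, w j * φ x r j) xs rs
      ≤ B / n * √(∑ i, ∑ j, φ (xs i) (rs i) j ^ 2) := by
  set a : Fin n → Fin d → ℝ := fun i => φ (xs i) (rs i)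
  have hsup (ε : Fin n → Bool) :
      sSup {v | ∃ w ∈ linW d B, v = 1 / (n : ℝ) * ∑ i, sgn (ε i) * ∑ j, w j * a i j}
        ≤ B / n * √(∑ j, (∑ i, sgn (ε i) * a i j) ^ 2) := by
    refine Real.sSup_le ?_ (by positivity)
    rintro _ ⟨w, hw, rfl⟩
    have hswap : ∑ i, sgn (ε i) * ∑ j, w j * a i j = ∑ j, w j * ∑ i, sgn (ε i) * a i j := by
      simp only [mul_sum]
      rw [sum_comm]
      exact sum_congr rfl fun j _ => sum_congr rfl fun i _ => by ring
    rw [hswap, div_eq_mul_one_div B, mul_comm B, mul_assoc]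
    gcongr
    exact sum_mul_le_of_mem_linW hw _
  unfold empRadW
  rw [div_le_iff₀ (by positivity)]
  calc _ ≤ ∑ ε : Fin n → Bool, B / n * √(∑ j, (∑ i, sgn (ε i) * a i j) ^ 2) :=
        sum_le_sum fun ε _ => hsup ε
    _ ≤ B / n * (2 ^ n * √(∑ i, ∑ j, a i j ^ 2)) := by
        rw [← mul_sum]
        gcongr
        simpa using sum_sqrt_sum_sq_sum_sgn_mul_le a
    _ = _ := by ring

section ProductWeights

variable {ι R : Type*} [Fintype ι] [DecidableEq ι] [Fintype R] {w : R → ℝ}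

lemma sum_prod_eq_one (hw : ∑ r, w r = 1) : ∑ rs : ι → R, ∏ i, w (rs i) = 1 := by
  rw [← Fintype.prod_sum (fun _ r => w r)]
  simp [hw]

-- The factors at coordinates `i ≠ i₀` each sum to `1`.
lemma sum_prod_mul_apply (hw : ∑ r, w r = 1) (g : R → ℝ) (i₀ : ι) :
    ∑ rs : ι → R, (∏ i, w (rs i)) * g (rs i₀) = ∑ r, w r * g r := by
  have hsplit (rs : ι → R) :
      (∏ i, w (rs i)) * g (rs i₀) = ∏ i, w (rs i) * if i = i₀ then g (rs i) else 1 := by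
    rw [prod_mul_distrib, prod_ite_eq' univ i₀ (fun i => g (rs i))]
    simp
  have hfactor (i : ι) :
      (∑ r, w r * if i = i₀ then g r else 1) = if i = i₀ then ∑ r, w r * g r else 1 := by
    split_ifs <;> simp [hw]
  simp_rw [hsplit, ← Fintype.prod_sum (fun i r => w r * if i = i₀ then g r else 1), hfactor]
  simp

lemma sum_prod_mul_sum_apply (hw : ∑ r, w r = 1) (g : ι → R → ℝ) :
    ∑ rs : ι → R, (∏ i, w (rs i)) * ∑ i, g i (rs i) = ∑ i, ∑ r, w r * g i r := by
  simp_rw [mul_sum]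
  rw [sum_comm]
  exact sum_congr rfl fun i _ => sum_prod_mul_apply hw (g i) i

end ProductWeights

section Bernoulli

variable {d : ℕ} {ρ : ℝ}

lemma bw_nonneg (hρ₀ : 0 ≤ ρ) (hρ₁ : ρ ≤ 1) (b : Bool) : 0 ≤ bw ρ b := by
  cases b <;> simp [bw] <;> linarith

lemma sum_bw : ∑ b, bw ρ b = 1 := by
  simp [bw]

lemma wtPair_nonneg (hρ₀ : 0 ≤ ρ) (hρ₁ : ρ ≤ 1) (r : (Fin d → Bool) × (Fin d → Bool)) :
    0 ≤ wtPair d ρ r :=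
  mul_nonneg (prod_nonneg fun _ _ => bw_nonneg hρ₀ hρ₁ _)
    (prod_nonneg fun _ _ => bw_nonneg hρ₀ hρ₁ _)

lemma sum_wtPair : ∑ r, wtPair d ρ r = 1 := by
  simp [wtPair, Fintype.sum_prod_type, ← sum_mul_sum, sum_prod_eq_one sum_bw]

lemma sum_wtVec_mul_mask_sq (j : Fin d) : ∑ r, wtVec d ρ r * mask (r j) ^ 2 = ρ := by
  simp only [wtVec]
  rw [sum_prod_mul_apply sum_bw (fun b => mask b ^ 2) j]
  simp [bw, mask]

lemma sum_wtPair_mul_mask_mul_mask_sq (j : Fin d) :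
    ∑ r, wtPair d ρ r * (mask (r.1 j) * mask (r.2 j)) ^ 2 = ρ ^ 2 := by
  have h := congrArg₂ (· * ·) (sum_wtVec_mul_mask_sq (ρ := ρ) j) (sum_wtVec_mul_mask_sq (ρ := ρ) j)
  simp only [sum_mul_sum] at h
  rw [Fintype.sum_prod_type, sq ρ, ← h]
  exact sum_congr rfl fun a _ => sum_congr rfl fun b _ => by simp only [wtPair, wtVec]; ring

end Bernoulli

lemma linFIII_eq (d : ℕ) :
    linFIII d = fun w x r => ∑ j, w j * (x j * mask (r.1 j) * mask (r.2 j)) := by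
  funext w x r
  exact sum_congr rfl fun j _ => by ring

lemma sum_prod_wtPair_mul_sum_sq {n d : ℕ} {ρ : ℝ} (xs : Fin n → Fin d → ℝ) :
    ∑ rs : Fin n → (Fin d → Bool) × (Fin d → Bool), (∏ i, wtPair d ρ (rs i)) *
        ∑ i, ∑ j, (xs i j * mask ((rs i).1 j) * mask ((rs i).2 j)) ^ 2
      = ρ ^ 2 * ∑ i, ∑ j, xs i j ^ 2 := by
  rw [sum_prod_mul_sum_apply sum_wtPair
    (fun i r => ∑ j, (xs i j * mask (r.1 j) * mask (r.2 j)) ^ 2), mul_sum]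
  refine sum_congr rfl fun i _ => ?_
  simp_rw [mul_sum]
  rw [sum_comm]
  refine sum_congr rfl fun j _ => ?_
  calc ∑ r, wtPair d ρ r * (xs i j * mask (r.1 j) * mask (r.2 j)) ^ 2
      = xs i j ^ 2 * ∑ r, wtPair d ρ r * (mask (r.1 j) * mask (r.2 j)) ^ 2 := by
        rw [mul_sum]
        exact sum_congr rfl fun r _ => by ring
    _ = ρ ^ 2 * xs i j ^ 2 := by
        rw [sum_wtPair_mul_mask_mul_mask_sq, mul_comm]

theorem sum_prod_wtPair_mul_empRadW_le {n d : ℕ} {ρ B₁ B₂ : ℝ} (hρ₀ : 0 ≤ ρ) (hρ₁ : ρ ≤ 1)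
    (hB₁ : 0 ≤ B₁) (hB₂ : 0 ≤ B₂) (xs : Fin n → Fin d → ℝ) (hxs : ∀ i, √(∑ j, xs i j ^ 2) ≤ B₂) :
    ∑ rs : Fin n → (Fin d → Bool) × (Fin d → Bool),
        (∏ i, wtPair d ρ (rs i)) * empRadW n (linW d B₁) (linFIII d) xs rs
      ≤ B₁ * B₂ * ρ / √n := by
  set P : (Fin n → (Fin d → Bool) × (Fin d → Bool)) → ℝ := fun rs => ∏ i, wtPair d ρ (rs i)
  set S : (Fin n → (Fin d → Bool) × (Fin d → Bool)) → ℝ :=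
    fun rs => ∑ i, ∑ j, (xs i j * mask ((rs i).1 j) * mask ((rs i).2 j)) ^ 2
  have hP : ∀ rs, 0 ≤ P rs := fun rs => prod_nonneg fun i _ => wtPair_nonneg hρ₀ hρ₁ _
  have hsample : ∑ i, ∑ j, xs i j ^ 2 ≤ n * B₂ ^ 2 := by
    simpa using sum_le_sum fun i (_ : i ∈ univ) => (Real.sqrt_le_left hB₂).1 (hxs i)
  calc ∑ rs, P rs * empRadW n (linW d B₁) (linFIII d) xs rs
      ≤ ∑ rs, P rs * (B₁ / n * √(S rs)) := by
        refine sum_le_sum fun rs _ => mul_le_mul_of_nonneg_left ?_ (hP rs)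
        have h := empRadW_linW_le hB₁ (fun x r j => x j * mask (r.1 j) * mask (r.2 j)) xs rs
        rw [← linFIII_eq] at h
        exact h
    _ = B₁ / n * ∑ rs, P rs * √(S rs) := by
        rw [mul_sum]
        exact sum_congr rfl fun rs _ => by ring
    _ ≤ B₁ / n * √(∑ rs, P rs * S rs) := by
        gcongr
        exact sum_mul_sqrt_le_sqrt_sum_mul (fun rs _ => hP rs) (sum_prod_eq_one sum_wtPair)
          (fun rs _ => by positivity)
    _ = B₁ / n * √(ρ ^ 2 * ∑ i, ∑ j, xs i j ^ 2) := by
        rw [sum_prod_wtPair_mul_sum_sq]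
    _ ≤ B₁ / n * √(ρ ^ 2 * (n * B₂ ^ 2)) := by
        gcongr
    _ = B₁ * B₂ * ρ / √n := by
        rw [Real.sqrt_mul (sq_nonneg ρ), Real.sqrt_mul n.cast_nonneg, Real.sqrt_sq hρ₀,
          Real.sqrt_sq hB₂, div_eq_mul_one_div _ (√n), ← Real.sqrt_div_self']
        ring

lemma integral_le_of_ae_le_of_nonneg {α : Type*} [MeasurableSpace α] {μ : Measure α}
    [IsProbabilityMeasure μ] {f : α → ℝ} {c : ℝ} (hc : 0 ≤ c) (hf : ∀ᵐ x ∂μ, f x ≤ c) :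
    ∫ x, f x ∂μ ≤ c := by
  by_cases hint : Integrable f μ
  · simpa using integral_mono_ae hint (integrable_const c) hf
  · rw [integral_undef hint]
    exact hc

theorem linear_dropout_rad_both_bound_general (d n : ℕ)
    (ρ B₁ B₂ : ℝ) (hρ0 : 0 ≤ ρ) (hρ1 : ρ ≤ 1) (hB₁ : 0 ≤ B₁) (hB₂ : 0 ≤ B₂)
    (DX : Measure (Fin d → ℝ)) [IsProbabilityMeasure DX]
    (hsupp : ∀ᵐ x ∂DX, Real.sqrt (∑ j, x j ^ 2) ≤ B₂) :
    radC n d DX (linW d B₁) (wtPair d ρ) (linFIII d) ≤ B₁ * B₂ * ρ / Real.sqrt n := by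
  have hsample : ∀ᵐ xs ∂Measure.pi fun _ : Fin n => DX, ∀ i, √(∑ j, xs i j ^ 2) ≤ B₂ :=
    ae_all_iff.2 fun i => (Measure.tendsto_eval_ae_ae (μ := fun _ => DX) (i := i)).eventually hsupp
  exact integral_le_of_ae_le_of_nonneg (by positivity)
    (hsample.mono fun xs => sum_prod_wtPair_mul_empRadW_le hρ0 hρ1 hB₁ hB₂ xs)

/-- For the network without hidden layer, with
`W = {w : ‖w‖₂ ≤ B₁}` and inputs a.s. satisfying `‖x‖₂ ≤ B₂`, the dropout
Rademacher complexity of dropout of both units and weights satisfies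
`𝔑ₙ(F_W^{(III)}) ≤ B₁ B₂ ρ/√n`. -/
theorem linear_dropout_rad_both_bound (d n : ℕ) (hn : 0 < n)
    (ρ B₁ B₂ : ℝ) (hρ0 : 0 ≤ ρ) (hρ1 : ρ ≤ 1) (hB₁ : 0 ≤ B₁) (hB₂ : 0 ≤ B₂)
    (DX : Measure (Fin d → ℝ)) [IsProbabilityMeasure DX]
    (hsupp : ∀ᵐ x ∂DX, Real.sqrt (∑ j, x j ^ 2) ≤ B₂) :
    radC n d DX (linW d B₁) (wtPair d ρ) (linFIII d) ≤ B₁ * B₂ * ρ / Real.sqrt n :=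
  linear_dropout_rad_both_bound_general d n ρ B₁ B₂ hρ0 hρ1 hB₁ hB₂ DX hsupp
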